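/- Let G ⊂ ℝ^d be a bounded domain with G ∈ FC(a, x*), i.e., for every x ∈ G there is a unit-speed absolutely continuous curve γ_x : [0, T(x)] → G with γ_x(0) = x, γ_x(T(x)) = x*, and the closed ball B_{at}(γ_x(t)) ⊂ G for all t ∈ [0, T(x)]. Then the circumradius and inradius at x*, namely R̄(G) = sup_{x∈G} ‖x − x*‖ and R_(G) = inf_{x ∈ ∂G} ‖x − x*‖, satisfy R_(G) ≤ R̄(G) ≤ C(a,d) · R_(G) for a constant C(a,d) depending only on a and d. -/

import Mathlib

open Metric Set

/-- The John / flexible cone condition `FC(a, x*)`: for every `x ∈ G` there is a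
unit-speed absolutely continuous curve (here: a 1-Lipschitz curve, `|γ'| = 1` a.e.)
from `x` to the center `x*` along which balls of radius `a·t` stay in `G`. -/
def FCcond {d : ℕ} (a : ℝ) (G : Set (EuclideanSpace ℝ (Fin d)))
    (x₀ : EuclideanSpace ℝ (Fin d)) : Prop :=
  ∀ x ∈ G, ∃ (T : ℝ) (γ : ℝ → EuclideanSpace ℝ (Fin d)), 0 ≤ T ∧
    LipschitzWith 1 γ ∧
    (∀ t ∈ Set.Icc 0 T, ∀ s ∈ Set.Icc 0 T, dist (γ t) (γ s) = |t - s|) ∧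
    γ 0 = x ∧ γ T = x₀ ∧
    ∀ t ∈ Set.Icc 0 T, closedBall (γ t) (a * t) ⊆ G

/-- Circumradius of `G` seen from `x₀`. -/
noncomputable def circumR {d : ℕ} (G : Set (EuclideanSpace ℝ (Fin d)))
    (x₀ : EuclideanSpace ℝ (Fin d)) : ℝ :=
  sSup {r : ℝ | ∃ x ∈ G, r = dist x x₀}

/-- Inradius of `G` at `x₀`, i.e. the distance from `x₀` to the boundary. -/
noncomputable def inR {d : ℕ} (G : Set (EuclideanSpace ℝ (Fin d)))
    (x₀ : EuclideanSpace ℝ (Fin d)) : ℝ :=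
  sInf {r : ℝ | ∃ x ∈ frontier G, r = dist x x₀}

/-!
The curve of the cone condition starting at `x` is a geodesic of length `T = ‖x - x*‖`
ending at `x*`, so its last ball shows `B_{a‖x - x*‖}(x*) ⊆ G`. A boundary point of the
open set `G` lies outside this ball, hence `a · R̄(G) ≤ R_(G)`, i.e. `C = a⁻¹` works. The
reverse inequality holds because `∂G ⊆ closure G ⊆ B_{R̄(G)}(x*)`.
-/

theorem Bornology.IsBounded.nonempty_frontier {E : Type*} [NormedAddCommGroup E]
    [NormedSpace ℝ E] [Nontrivial E] {s : Set E} (hs : Bornology.IsBounded s)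
    (hne : s.Nonempty) : (frontier s).Nonempty :=
  nonempty_frontier_iff.2 ⟨hne, fun h => NormedSpace.unbounded_univ ℝ E (h ▸ hs)⟩

variable {d : ℕ} {a r : ℝ} {G : Set (EuclideanSpace ℝ (Fin d))}
  {x₀ x y : EuclideanSpace ℝ (Fin d)}

theorem dist_le_circumR (hG : Bornology.IsBounded G) (hx : x ∈ G) :
    dist x x₀ ≤ circumR G x₀ := by
  obtain ⟨R, hR⟩ := hG.subset_closedBall x₀
  exact le_csSup ⟨R, by rintro _ ⟨z, hz, rfl⟩; exact hR hz⟩ ⟨x, hx, rfl⟩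

theorem circumR_le (hne : G.Nonempty) (h : ∀ x ∈ G, dist x x₀ ≤ r) : circumR G x₀ ≤ r :=
  csSup_le (hne.elim fun x hx => ⟨_, x, hx, rfl⟩) (by rintro _ ⟨x, hx, rfl⟩; exact h x hx)

theorem inR_le_dist (hy : y ∈ frontier G) : inR G x₀ ≤ dist y x₀ :=
  csInf_le ⟨0, by rintro _ ⟨z, -, rfl⟩; exact dist_nonneg⟩ ⟨y, hy, rfl⟩

theorem le_inR (hne : (frontier G).Nonempty) (h : ∀ y ∈ frontier G, r ≤ dist y x₀) :
    r ≤ inR G x₀ :=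
  le_csInf (hne.elim fun y hy => ⟨_, y, hy, rfl⟩) (by rintro _ ⟨y, hy, rfl⟩; exact h y hy)

theorem circumR_of_subsingleton [Subsingleton (EuclideanSpace ℝ (Fin d))] :
    circumR G x₀ = 0 := by
  have hS : ∀ r ∈ {r : ℝ | ∃ x ∈ G, r = dist x x₀}, r = 0 := by
    rintro _ ⟨x, -, rfl⟩
    exact dist_eq_zero.2 (Subsingleton.elim x x₀)
  exact le_antisymm (Real.sSup_nonpos fun r hr => (hS r hr).le)
    (Real.sSup_nonneg fun r hr => (hS r hr).ge)

theorem inR_of_subsingleton [Subsingleton (EuclideanSpace ℝ (Fin d))] :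
    inR G x₀ = 0 := by
  have hS : ∀ r ∈ {r : ℝ | ∃ x ∈ frontier G, r = dist x x₀}, r = 0 := by
    rintro _ ⟨x, -, rfl⟩
    exact dist_eq_zero.2 (Subsingleton.elim x x₀)
  exact le_antisymm (Real.sInf_nonpos fun r hr => (hS r hr).le)
    (Real.sInf_nonneg fun r hr => (hS r hr).ge)

theorem inR_le_circumR (hG : Bornology.IsBounded G) (hfr : (frontier G).Nonempty) :
    inR G x₀ ≤ circumR G x₀ := by
  obtain ⟨y, hy⟩ := hfr
  have hclosure : closure G ⊆ closedBall x₀ (circumR G x₀) :=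
    closure_minimal (fun x hx => dist_le_circumR hG hx) isClosed_closedBall
  exact (inR_le_dist hy).trans (hclosure (frontier_subset_closure hy))

namespace FCcond

theorem closedBall_subset (hFC : FCcond a G x₀) (hx : x ∈ G) :
    closedBall x₀ (a * dist x x₀) ⊆ G := by
  obtain ⟨T, γ, hT, -, hdist, hγ0, hγT, hball⟩ := hFC x hx
  have hxT : dist x x₀ = T := by
    simpa [hγ0, hγT, abs_of_nonneg hT] using hdist 0 ⟨le_rfl, hT⟩ T ⟨hT, le_rfl⟩
  simpa [hxT, hγT] using hball T ⟨hT, le_rfl⟩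

theorem mul_dist_lt_dist_of_mem_frontier (hFC : FCcond a G x₀) (hG : IsOpen G)
    (hx : x ∈ G) (hy : y ∈ frontier G) : a * dist x x₀ < dist y x₀ := by
  have hyG : y ∉ G := (hG.frontier_eq ▸ hy).2
  by_contra! h
  exact hyG (hFC.closedBall_subset hx (mem_closedBall.2 h))

theorem circumR_le_inv_mul_inR (hFC : FCcond a G x₀) (ha : 0 < a) (hG : IsOpen G)
    (hx₀ : x₀ ∈ G) (hfr : (frontier G).Nonempty) : circumR G x₀ ≤ a⁻¹ * inR G x₀ :=
  circumR_le ⟨x₀, hx₀⟩ fun _ hx => (le_inv_mul_iff₀ ha).2 <|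
    le_inR hfr fun _ hy => (hFC.mul_dist_lt_dist_of_mem_frontier hG hx hy).le

end FCcond

theorem circumradius_comparable_inradius_of_FC (d : ℕ) (a : ℝ) (ha : 0 < a) :
    ∃ C : ℝ, 0 < C ∧
      ∀ (G : Set (EuclideanSpace ℝ (Fin d))) (x₀ : EuclideanSpace ℝ (Fin d)),
        IsOpen G → IsConnected G → Bornology.IsBounded G → x₀ ∈ G →
        FCcond a G x₀ →
        inR G x₀ ≤ circumR G x₀ ∧ circumR G x₀ ≤ C * inR G x₀ := by
  refine ⟨a⁻¹, inv_pos.2 ha, fun G x₀ hGo _ hGb hx₀ hFC => ?_⟩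
  rcases subsingleton_or_nontrivial (EuclideanSpace ℝ (Fin d)) with _ | _
  · simp [circumR_of_subsingleton, inR_of_subsingleton]
  have hfr : (frontier G).Nonempty := hGb.nonempty_frontier ⟨x₀, hx₀⟩
  exact ⟨inR_le_circumR hGb hfr, hFC.circumR_le_inv_mul_inR ha hGo hx₀ hfr⟩
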